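/- Let T = Trian(A, M, B) be a triangular algebra with M faithful (as left A-module and right B-module). Then the group Aut₀(T) of automorphisms of T fixing the idempotent p is isomorphic to the group GL_{A,B}(M) of invertible R-linear maps T₀ of M for which there exist automorphisms α of A and β of B with T₀(a m b) = α(a) T₀(m) β(b) for all a ∈ A, m ∈ M, b ∈ B. -/
import Mathlib


open TrivSqZeroExt MulOpposite

section Triangular

variable (R A B M : Type*) [CommRing R] [Ring A] [Ring B] [Algebra R A] [Algebra R B]
  [AddCommGroup M] [Module A M] [Module Bᵐᵒᵖ M] [SMulCommClass A Bᵐᵒᵖ M]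
  [Module R M] [IsScalarTower R A M] [IsScalarTower R Bᵐᵒᵖ M]

/-- The left `A × B`-module structure on `M` (through the first factor), making
`TrivSqZeroExt (A × B) M` the triangular algebra `Trian(A, M, B)`. -/
noncomputable instance Trian.leftModule : Module (A × B) M :=
  Module.compHom M (RingHom.fst A B)

/-- The right `A × B`-module structure on `M` (through the second factor). -/
noncomputable instance Trian.rightModule : Module (A × B)ᵐᵒᵖ M :=
  Module.compHom M (RingHom.op (RingHom.snd A B))

instance Trian.smulCommClass : SMulCommClass (A × B) (A × B)ᵐᵒᵖ M :=
  ⟨fun p q m => by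
    show p.1 • (op q.unop.2) • m = (op q.unop.2) • p.1 • m
    exact smul_comm _ _ _⟩

instance Trian.leftTower : IsScalarTower R (A × B) M :=
  ⟨fun r p m => by
    show (r • p).1 • m = r • (p.1 • m)
    rw [Prod.smul_fst]
    exact smul_assoc r p.1 m⟩

instance Trian.rightTower : IsScalarTower R (A × B)ᵐᵒᵖ M :=
  ⟨fun r q m => by
    show (op ((r • q).unop.2)) • m = r • (op q.unop.2) • m
    rw [MulOpposite.unop_smul, Prod.smul_snd, MulOpposite.op_smul]
    exact smul_assoc r (op q.unop.2) m⟩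

/-- The group of algebra automorphisms of the triangular algebra
`T = Trian(A, M, B)` fixing the idempotent `p = (1_A, 0; 0, 0)`. -/
noncomputable def TrianAut₀ :
    Subgroup ((TrivSqZeroExt (A × B) M) ≃ₐ[R] (TrivSqZeroExt (A × B) M)) where
  carrier := {σ | σ (inl ((1, 0) : A × B)) = inl ((1, 0) : A × B)}
  one_mem' := rfl
  mul_mem' := by
    intro σ τ hσ hτ
    show σ (τ _) = _
    rw [hτ, hσ]
  inv_mem' := by
    intro σ hσ
    show σ.symm _ = _
    rw [← hσ, AlgEquiv.symm_apply_apply]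
    exact hσ.symm

/-- The group `GL_{A,B}(M)` of invertible `R`-linear maps `T₀` of `M` for which
there exist automorphisms `α` of `A` and `β` of `B` with
`T₀(a m b) = α(a) T₀(m) β(b)`. -/
noncomputable def GLAB : Subgroup (M ≃ₗ[R] M) where
  carrier := {T₀ | ∃ (α : A ≃ₐ[R] A) (β : B ≃ₐ[R] B),
    ∀ (a : A) (b : B) (m : M), T₀ (a • (op b) • m) = α a • (op (β b)) • T₀ m}
  one_mem' := ⟨1, 1, fun _ _ _ => rfl⟩
  mul_mem' := by
    rintro S T ⟨α, β, hS⟩ ⟨α', β', hT⟩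
    refine ⟨α * α', β * β', fun a b m => ?_⟩
    show S (T (a • (op b) • m)) = _
    rw [hT, hS]
    rfl
  inv_mem' := by
    rintro S ⟨α, β, hS⟩
    refine ⟨α.symm, β.symm, fun a b m => ?_⟩
    show S.symm (a • (op b) • m) = α.symm a • (op (β.symm b)) • S.symm m
    apply S.injective
    rw [S.apply_symm_apply, hS, S.apply_symm_apply, α.apply_symm_apply, β.apply_symm_apply]

end Triangular

section Aux

variable {R A B M : Type*} [CommRing R] [Ring A] [Ring B] [Algebra R A] [Algebra R B]
  [AddCommGroup M] [Module A M] [Module Bᵐᵒᵖ M] [SMulCommClass A Bᵐᵒᵖ M]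
  [Module R M] [IsScalarTower R A M] [IsScalarTower R Bᵐᵒᵖ M]

local notation "𝕋" => TrivSqZeroExt (A × B) M

lemma trian_prod_smul_def (x : A × B) (m : M) : x • m = x.1 • m := rfl

lemma trian_prod_op_smul_def (x : A × B) (m : M) : (op x) • m = (op x.2) • m := rfl

lemma trian_peirce_pp (t : 𝕋) :
    inl ((1, 0) : A × B) * t * inl ((1, 0) : A × B) = inl ((fst t).1, 0) := by
  refine TrivSqZeroExt.ext ?_ ?_
  · simp [Prod.ext_iff]
  · simp [snd_mul, fst_mul, trian_prod_smul_def, trian_prod_op_smul_def]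

lemma trian_peirce_qq (t : 𝕋) :
    inl ((0, 1) : A × B) * t * inl ((0, 1) : A × B) = inl (0, (fst t).2) := by
  refine TrivSqZeroExt.ext ?_ ?_
  · simp [Prod.ext_iff]
  · simp [snd_mul, fst_mul, trian_prod_smul_def, trian_prod_op_smul_def]

lemma trian_peirce_pq (t : 𝕋) :
    inl ((1, 0) : A × B) * t * inl ((0, 1) : A × B) = inr (snd t) := by
  refine TrivSqZeroExt.ext ?_ ?_
  · simp [Prod.ext_iff]
  · simp [snd_mul, fst_mul, trian_prod_smul_def, trian_prod_op_smul_def]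

lemma trian_sigma_symm_p (σ : 𝕋 ≃ₐ[R] 𝕋) (hσ : σ (inl ((1, 0) : A × B)) = (inl ((1, 0) : A × B) : 𝕋)) :
    σ.symm (inl ((1, 0) : A × B)) = (inl ((1, 0) : A × B) : 𝕋) := by
  exact σ.injective (by rw [AlgEquiv.apply_symm_apply, hσ])

lemma trian_sigma_q (σ : 𝕋 ≃ₐ[R] 𝕋) (hσ : σ (inl ((1, 0) : A × B)) = (inl ((1, 0) : A × B) : 𝕋)) :
    σ (inl ((0, 1) : A × B)) = (inl ((0, 1) : A × B) : 𝕋) := by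
  have h1 : (inl ((0, 1) : A × B) : 𝕋) = 1 - inl ((1, 0) : A × B) := by
    refine TrivSqZeroExt.ext ?_ ?_ <;> simp [Prod.ext_iff]
  rw [h1, map_sub, map_one, hσ]

lemma trian_sigma_inl_a (σ : 𝕋 ≃ₐ[R] 𝕋) (hσ : σ (inl ((1, 0) : A × B)) = (inl ((1, 0) : A × B) : 𝕋)) (a : A) :
    σ (inl ((a, 0) : A × B)) = inl ((fst (σ (inl ((a, 0) : A × B)))).1, (0 : B)) := by
  conv_lhs => rw [show (inl ((a, 0) : A × B) : 𝕋)
      = inl ((1, 0) : A × B) * inl ((a, 0) : A × B) * inl ((1, 0) : A × B) by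
    rw [trian_peirce_pp]; simp]
  rw [map_mul, map_mul, hσ, trian_peirce_pp]

lemma trian_sigma_inl_b (σ : 𝕋 ≃ₐ[R] 𝕋) (hσ : σ (inl ((1, 0) : A × B)) = (inl ((1, 0) : A × B) : 𝕋)) (b : B) :
    σ (inl ((0, b) : A × B)) = inl ((0 : A), (fst (σ (inl ((0, b) : A × B)))).2) := by
  conv_lhs => rw [show (inl ((0, b) : A × B) : 𝕋)
      = inl ((0, 1) : A × B) * inl ((0, b) : A × B) * inl ((0, 1) : A × B) by
    rw [trian_peirce_qq]; simp]
  rw [map_mul, map_mul, trian_sigma_q σ hσ, trian_peirce_qq]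

lemma trian_sigma_inr (σ : 𝕋 ≃ₐ[R] 𝕋) (hσ : σ (inl ((1, 0) : A × B)) = (inl ((1, 0) : A × B) : 𝕋)) (m : M) :
    σ (inr m) = inr (snd (σ (inr m))) := by
  conv_lhs => rw [show (inr m : 𝕋)
      = inl ((1, 0) : A × B) * inr m * inl ((0, 1) : A × B) by
    rw [trian_peirce_pq]; simp]
  rw [map_mul, map_mul, hσ, trian_sigma_q σ hσ, trian_peirce_pq]

/-- The automorphism of `A` induced by `σ ∈ Aut₀`. -/
noncomputable def trianAutA (σ : 𝕋 ≃ₐ[R] 𝕋) (hσ : σ (inl ((1, 0) : A × B)) = (inl ((1, 0) : A × B) : 𝕋)) : A ≃ₐ[R] A where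
  toFun a := (fst (σ (inl ((a, 0) : A × B)))).1
  invFun a := (fst (σ.symm (inl ((a, 0) : A × B)))).1
  left_inv a := by
    dsimp only
    rw [← trian_sigma_inl_a σ hσ a, AlgEquiv.symm_apply_apply]
    simp
  right_inv a := by
    dsimp only
    rw [← trian_sigma_inl_a σ.symm (trian_sigma_symm_p σ hσ) a, AlgEquiv.apply_symm_apply]
    simp
  map_add' a a' := by
    have h1 : (inl ((a + a', 0) : A × B) : 𝕋) = inl ((a, 0) : A × B) + inl ((a', 0) : A × B) := by
      refine TrivSqZeroExt.ext ?_ ?_ <;> simp [Prod.ext_iff]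
    rw [h1, map_add]
    simp
  map_mul' a a' := by
    have h1 : (inl ((a * a', 0) : A × B) : 𝕋) = inl ((a, 0) : A × B) * inl ((a', 0) : A × B) := by
      rw [inl_mul_inl]; simp [Prod.ext_iff]
    rw [h1, map_mul, trian_sigma_inl_a σ hσ a, trian_sigma_inl_a σ hσ a', inl_mul_inl]
    simp
  commutes' r := by
    have h1 : (inl ((algebraMap R A r, 0) : A × B) : 𝕋)
        = algebraMap R 𝕋 r * inl ((1, 0) : A × B) := by
      rw [TrivSqZeroExt.algebraMap_eq_inl', inl_mul_inl]
      congr 1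
      simp [Prod.ext_iff, Algebra.algebraMap_eq_smul_one]
    show (fst (σ (inl ((algebraMap R A r, 0) : A × B)))).1 = algebraMap R A r
    rw [h1, map_mul, AlgEquiv.commutes, hσ, ← h1]
    simp

/-- The automorphism of `B` induced by `σ ∈ Aut₀`. -/
noncomputable def trianAutB (σ : 𝕋 ≃ₐ[R] 𝕋) (hσ : σ (inl ((1, 0) : A × B)) = (inl ((1, 0) : A × B) : 𝕋)) : B ≃ₐ[R] B where
  toFun b := (fst (σ (inl ((0, b) : A × B)))).2
  invFun b := (fst (σ.symm (inl ((0, b) : A × B)))).2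
  left_inv b := by
    dsimp only
    rw [← trian_sigma_inl_b σ hσ b, AlgEquiv.symm_apply_apply]
    simp
  right_inv b := by
    dsimp only
    rw [← trian_sigma_inl_b σ.symm (trian_sigma_symm_p σ hσ) b, AlgEquiv.apply_symm_apply]
    simp
  map_add' b b' := by
    have h1 : (inl ((0, b + b') : A × B) : 𝕋) = inl ((0, b) : A × B) + inl ((0, b') : A × B) := by
      refine TrivSqZeroExt.ext ?_ ?_ <;> simp [Prod.ext_iff]
    rw [h1, map_add]
    simp
  map_mul' b b' := by
    have h1 : (inl ((0, b * b') : A × B) : 𝕋) = inl ((0, b) : A × B) * inl ((0, b') : A × B) := by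
      rw [inl_mul_inl]; simp [Prod.ext_iff]
    rw [h1, map_mul, trian_sigma_inl_b σ hσ b, trian_sigma_inl_b σ hσ b', inl_mul_inl]
    simp
  commutes' r := by
    have h1 : (inl ((0, algebraMap R B r) : A × B) : 𝕋)
        = algebraMap R 𝕋 r * inl ((0, 1) : A × B) := by
      rw [TrivSqZeroExt.algebraMap_eq_inl', inl_mul_inl]
      congr 1
      simp [Prod.ext_iff, Algebra.algebraMap_eq_smul_one]
    show (fst (σ (inl ((0, algebraMap R B r) : A × B)))).2 = algebraMap R B r
    rw [h1, map_mul, AlgEquiv.commutes, trian_sigma_q σ hσ, ← h1]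
    simp

/-- The invertible linear map of `M` induced by `σ ∈ Aut₀`. -/
noncomputable def trianLinT (σ : 𝕋 ≃ₐ[R] 𝕋) (hσ : σ (inl ((1, 0) : A × B)) = (inl ((1, 0) : A × B) : 𝕋)) : M ≃ₗ[R] M where
  toFun m := snd (σ (inr m))
  invFun m := snd (σ.symm (inr m))
  left_inv m := by
    dsimp only
    rw [← trian_sigma_inr σ hσ m, AlgEquiv.symm_apply_apply, snd_inr]
  right_inv m := by
    dsimp only
    rw [← trian_sigma_inr σ.symm (trian_sigma_symm_p σ hσ) m, AlgEquiv.apply_symm_apply, snd_inr]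
  map_add' m m' := by
    rw [inr_add, map_add, snd_add]
  map_smul' r m := by
    rw [inr_smul, map_smul, snd_smul, RingHom.id_apply]

lemma trian_compat (σ : 𝕋 ≃ₐ[R] 𝕋) (hσ : σ (inl ((1, 0) : A × B)) = (inl ((1, 0) : A × B) : 𝕋)) (a : A) (b : B) (m : M) :
    trianLinT σ hσ (a • (op b) • m)
      = trianAutA σ hσ a • (op (trianAutB σ hσ b)) • trianLinT σ hσ m := by
  have key : ∀ (x : A) (y : B) (n : M),
      (inl ((x, 0) : A × B) : 𝕋) * inr n * inl ((0, y) : A × B) = inr (x • (op y) • n) := by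
    intro x y n
    rw [inl_mul_inr, inr_mul_inl]
    congr 1
    rw [trian_prod_smul_def, trian_prod_op_smul_def]
    exact (smul_comm _ _ _).symm
  show snd (σ (inr (a • (op b) • m))) = _
  rw [← key a b m, map_mul, map_mul, trian_sigma_inl_a σ hσ a, trian_sigma_inr σ hσ m,
    trian_sigma_inl_b σ hσ b, key]
  rfl

/-- The group homomorphism from `Aut₀` to `GL_{A,B}(M)`. -/
noncomputable def trianPhi : ↥(TrianAut₀ R A B M) →* ↥(GLAB R A B M) where
  toFun σ := ⟨trianLinT σ.1 σ.2, trianAutA σ.1 σ.2, trianAutB σ.1 σ.2, trian_compat σ.1 σ.2⟩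
  map_one' := by
    apply Subtype.ext
    apply LinearEquiv.ext
    intro m
    rfl
  map_mul' σ τ := by
    apply Subtype.ext
    apply LinearEquiv.ext
    intro m
    have hτ : τ.1 (inl ((1, 0) : A × B)) = (inl ((1, 0) : A × B) : 𝕋) := τ.2
    show snd ((σ.1 * τ.1) (inr m)) = snd (σ.1 (inr (snd (τ.1 (inr m)))))
    have : (σ.1 * τ.1) (inr m : 𝕋) = σ.1 (τ.1 (inr m)) := rfl
    rw [this]
    conv_lhs => rw [trian_sigma_inr τ.1 hτ m]

end Aux

/-- For a triangular algebra `T = Trian(A, M, B)` with `M` faithful on both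
sides, the group of automorphisms of `T` fixing the idempotent `p` is
isomorphic to `GL_{A,B}(M)`. -/
theorem aut₀_iso_GLAB
    (R A B M : Type*) [CommRing R] [Ring A] [Ring B] [Algebra R A] [Algebra R B]
    [AddCommGroup M] [Module A M] [Module Bᵐᵒᵖ M] [SMulCommClass A Bᵐᵒᵖ M]
    [Module R M] [IsScalarTower R A M] [IsScalarTower R Bᵐᵒᵖ M]
    (hA : ∀ a : A, (∀ m : M, a • m = 0) → a = 0)
    (hB : ∀ b : B, (∀ m : M, (op b) • m = 0) → b = 0) :
    Nonempty (↥(TrianAut₀ R A B M) ≃* ↥(GLAB R A B M)) := by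
  refine ⟨MulEquiv.ofBijective (trianPhi (R := R) (A := A) (B := B) (M := M)) ⟨?_, ?_⟩⟩
  · -- injectivity
    rw [injective_iff_map_eq_one]
    rintro ⟨σ, hσ⟩ h
    have hσ' : σ (inl ((1, 0) : A × B)) = (inl ((1, 0) : A × B) : TrivSqZeroExt (A × B) M) := hσ
    have hT : ∀ m : M, snd (σ (inr m)) = m := by
      intro m
      have h1 : (trianLinT σ hσ' : M ≃ₗ[R] M) = 1 := congrArg Subtype.val h
      exact DFunLike.congr_fun (congrArg (fun (e : M ≃ₗ[R] M) => e.toLinearMap) h1) m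
    have hAraw : ∀ a : A, (fst (σ (inl ((a, 0) : A × B)))).1 = a := by
      intro a
      have h2 : ∀ m : M, trianAutA σ hσ' a • m = a • m := by
        intro m
        have h3 := trian_compat σ hσ' a 1 m
        have h4 : ∀ n : M, trianLinT σ hσ' n = n := hT
        rw [h4, h4] at h3
        simpa using h3.symm
      have h5 := hA (trianAutA σ hσ' a - a) (fun m => by rw [sub_smul, h2, sub_self])
      exact sub_eq_zero.mp h5
    have hBraw : ∀ b : B, (fst (σ (inl ((0, b) : A × B)))).2 = b := by
      intro b
      have h2 : ∀ m : M, (op (trianAutB σ hσ' b)) • m = (op b) • m := by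
        intro m
        have h3 := trian_compat σ hσ' 1 b m
        have h4 : ∀ n : M, trianLinT σ hσ' n = n := hT
        rw [h4, h4] at h3
        simpa using h3.symm
      have h5 := hB (trianAutB σ hσ' b - b)
        (fun m => by rw [op_sub, sub_smul, h2, sub_self])
      exact sub_eq_zero.mp h5
    apply Subtype.ext
    apply AlgEquiv.ext
    intro t
    show σ t = t
    have hdecomp : t = inl (((fst t).1, 0) : A × B) + inl ((0, (fst t).2) : A × B) + inr (snd t) := by
      refine TrivSqZeroExt.ext ?_ ?_ <;> simp [Prod.ext_iff]
    conv_lhs => rw [hdecomp]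
    rw [map_add, map_add, trian_sigma_inl_a σ hσ', trian_sigma_inl_b σ hσ',
      trian_sigma_inr σ hσ', hAraw, hBraw, hT, ← hdecomp]
  · -- surjectivity
    rintro ⟨T₀, hT₀⟩
    obtain ⟨α, β, hc⟩ := hT₀
    have hTa : ∀ (a : A) (m : M), T₀ (a • m) = α a • T₀ m := by
      intro a m
      simpa using hc a 1 m
    have hTb : ∀ (b : B) (m : M), T₀ ((op b) • m) = (op (β b)) • T₀ m := by
      intro b m
      simpa using hc 1 b m
    let l : TrivSqZeroExt (A × B) M ≃ₗ[R] TrivSqZeroExt (A × B) M :=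
      { toFun := fun t => inl (((α (fst t).1, β (fst t).2) : A × B)) + inr (T₀ (snd t))
        invFun := fun t => inl (((α.symm (fst t).1, β.symm (fst t).2) : A × B)) + inr (T₀.symm (snd t))
        map_add' := fun t t' => by
          refine TrivSqZeroExt.ext ?_ ?_ <;> simp [Prod.ext_iff]
        map_smul' := fun r t => by
          refine TrivSqZeroExt.ext ?_ ?_ <;> simp [Prod.ext_iff]
        left_inv := fun t => by
          refine TrivSqZeroExt.ext ?_ ?_ <;> simp [Prod.ext_iff]
        right_inv := fun t => by
          refine TrivSqZeroExt.ext ?_ ?_ <;> simp [Prod.ext_iff] }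
    have hl1 : l 1 = 1 := by
      refine TrivSqZeroExt.ext ?_ ?_ <;> simp [l, Prod.ext_iff]
    have hlm : ∀ x y : TrivSqZeroExt (A × B) M, l (x * y) = l x * l y := by
      intro x y
      refine TrivSqZeroExt.ext ?_ ?_
      · simp [l, Prod.ext_iff]
      · simp [l, snd_mul, fst_mul, trian_prod_smul_def, trian_prod_op_smul_def, hTa, hTb]
    let σ := AlgEquiv.ofLinearEquiv l hl1 hlm
    have hσmem : σ ∈ TrianAut₀ R A B M := by
      show σ (inl ((1, 0) : A × B)) = inl ((1, 0) : A × B)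
      show l (inl ((1, 0) : A × B)) = inl ((1, 0) : A × B)
      refine TrivSqZeroExt.ext ?_ ?_ <;> simp [l, Prod.ext_iff]
    refine ⟨⟨σ, hσmem⟩, ?_⟩
    apply Subtype.ext
    apply LinearEquiv.ext
    intro m
    show snd (σ (inr m)) = T₀ m
    show snd (l (inr m)) = T₀ m
    simp [l]
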